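/- Temperature bounds at cooling switches (Proposition 2): for any execution trace of the engine CPS Eng: (1) at any point where Eng turns on the cooling (i.e., performs the τ-transition writing the value on to the actuator cool), the current value of the state variable temp lies in the interval (10−ε, 11+ε+δ]; (2) at any point where Eng turns off the cooling (i.e., performs the τ-transition writing the value off to the actuator cool), the current value of temp lies in the interval (10−ε−5·(1+δ), 11+ε+δ−5·(1−δ)]. -/
import Mathlib


namespace CCPS

/-! ## Names and values -/

abbrev Chan := ℕ
abbrev SensName := ℕ
abbrev ActName := ℕ
abbrev Val := ℝ

/-! ## Processes (value binders as functions, process variables in de Bruijn style) -/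

inductive Proc : Type where
  | nil   : Proc
  | pvar  : ℕ → Proc
  | tick  : Proc → Proc
  | par   : Proc → Proc → Proc
  | out   : Chan → Val → Proc → Proc → Proc      -- ⌊c̄⟨v⟩.P⌋Q
  | inp   : Chan → (Val → Proc) → Proc → Proc    -- ⌊c(x).P⌋Q
  | read  : SensName → (Val → Proc) → Proc → Proc -- ⌊s?(x).P⌋Q
  | write : ActName → Val → Proc → Proc → Proc   -- ⌊a!⟨v⟩.P⌋Q
  | res   : Proc → Chan → Proc                   -- P∖c
  | fix   : Proc → Proc                          -- fix X.P  (binds de Bruijn index 0)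

/-- Lift (shift) all process variables ≥ cutoff `c` by one. -/
def Proc.lift (c : ℕ) : Proc → Proc
  | .nil => .nil
  | .pvar m => if m < c then .pvar m else .pvar (m+1)
  | .tick P => .tick (Proc.lift c P)
  | .par P Q => .par (Proc.lift c P) (Proc.lift c Q)
  | .out ch v P Q => .out ch v (Proc.lift c P) (Proc.lift c Q)
  | .inp ch f Q => .inp ch (fun v => Proc.lift c (f v)) (Proc.lift c Q)
  | .read s f Q => .read s (fun v => Proc.lift c (f v)) (Proc.lift c Q)
  | .write a v P Q => .write a v (Proc.lift c P) (Proc.lift c Q)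
  | .res P ch => .res (Proc.lift c P) ch
  | .fix P => .fix (Proc.lift (c+1) P)

/-- Substitute process variable `n` by `R`. -/
def Proc.subst : Proc → ℕ → Proc → Proc
  | .nil, _, _ => .nil
  | .pvar m, n, R => if m = n then R else if n < m then .pvar (m-1) else .pvar m
  | .tick P, n, R => .tick (Proc.subst P n R)
  | .par P Q, n, R => .par (Proc.subst P n R) (Proc.subst Q n R)
  | .out ch v P Q, n, R => .out ch v (Proc.subst P n R) (Proc.subst Q n R)
  | .inp ch f Q, n, R => .inp ch (fun v => Proc.subst (f v) n R) (Proc.subst Q n R)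
  | .read s f Q, n, R => .read s (fun v => Proc.subst (f v) n R) (Proc.subst Q n R)
  | .write a v P Q, n, R => .write a v (Proc.subst P n R) (Proc.subst Q n R)
  | .res P ch, n, R => .res (Proc.subst P n R) ch
  | .fix P, n, R => .fix (Proc.subst P (n+1) (Proc.lift 0 R))

/-- Unfolding of recursion: P[fix X.P / X]. -/
def Proc.unfold (P : Proc) : Proc := Proc.subst P 0 (.fix P)

/-! ## Labels -/

inductive Label : Type where
  | tick  : Label
  | tau   : Label
  | out   : Chan → Val → Label     -- c̄v
  | inp   : Chan → Val → Label     -- cv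
  | write : ActName → Val → Label  -- a!v
  | read  : SensName → Val → Label -- s?v

/-! ## Labelled transition system for processes.

Untimed transitions `UStep` (labels different from tick) are defined first;
then timed transitions `TStep` (which use the absence of τ-transitions
negatively) are defined on top of them, and `Step` combines the two. -/

inductive UStep : Proc → Label → Proc → Prop where
  | outp  : UStep (.out c v P Q) (.out c v) P
  | inpp  : UStep (.inp c f Q) (.inp c v) (f v)
  | write : UStep (.write a v P Q) (.write a v) P
  | read  : UStep (.read s f Q) (.read s v) (f v)
  | comL  : UStep P (.out c v) P' → UStep Q (.inp c v) Q' →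
            UStep (.par P Q) .tau (.par P' Q')
  | comR  : UStep P (.inp c v) P' → UStep Q (.out c v) Q' →
            UStep (.par P Q) .tau (.par P' Q')
  | parL  : UStep P l P' → l ≠ .tick → UStep (.par P Q) l (.par P' Q)
  | parR  : UStep Q l Q' → l ≠ .tick → UStep (.par P Q) l (.par P Q')
  | res   : UStep P l P' → (∀ v, l ≠ .inp c v ∧ l ≠ .out c v) →
            UStep (.res P c) l (.res P' c)
  | unfold : UStep (Proc.unfold P) l Q → UStep (.fix P) l Q

inductive TStep : Proc → Proc → Prop where
  | nil          : TStep .nil .nil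
  | delay        : TStep (.tick P) P
  | timeoutOut   : TStep (.out c v P Q) Q
  | timeoutInp   : TStep (.inp c f Q) Q
  | timeoutRead  : TStep (.read s f Q) Q
  | timeoutWrite : TStep (.write a v P Q) Q
  | timePar      : TStep P P' → TStep Q Q' → (∀ R, ¬ UStep (.par P Q) .tau R) →
                   TStep (.par P Q) (.par P' Q')
  | res          : TStep P P' → TStep (.res P c) (.res P' c)
  | unfold       : TStep (Proc.unfold P) Q → TStep (.fix P) Q

/-- The process LTS. -/
def Step (P : Proc) (l : Label) (Q : Proc) : Prop :=
  match l with
  | .tick => TStep P Q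
  | _ => UStep P l Q

/-! ## Structural congruence: the least congruence containing commutativity and
associativity of parallel composition, with nil as neutral element. -/

inductive SC : Proc → Proc → Prop where
  | refl      : SC P P
  | symm      : SC P Q → SC Q P
  | trans     : SC P Q → SC Q R → SC P R
  | parComm   : SC (.par P Q) (.par Q P)
  | parAssoc  : SC (.par (.par P Q) R) (.par P (.par Q R))
  | parNil    : SC (.par P .nil) P
  | tickCong  : SC P P' → SC (.tick P) (.tick P')
  | parCong   : SC P P' → SC Q Q' → SC (.par P Q) (.par P' Q')
  | outCong   : SC P P' → SC Q Q' → SC (.out c v P Q) (.out c v P' Q')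
  | inpCong   : (∀ v, SC (f v) (g v)) → SC Q Q' → SC (.inp c f Q) (.inp c g Q')
  | readCong  : (∀ v, SC (f v) (g v)) → SC Q Q' → SC (.read s f Q) (.read s g Q')
  | writeCong : SC P P' → SC Q Q' → SC (.write a v P Q) (.write a v P' Q')
  | resCong   : SC P P' → SC (.res P c) (.res P' c)
  | fixCong   : SC P P' → SC (.fix P) (.fix P')

/-! ## Static predicates on processes -/

/-- All free process variables are < d. -/
inductive ClosedAbove : ℕ → Proc → Prop where
  | nil   : ClosedAbove d .nil
  | pvar  : m < d → ClosedAbove d (.pvar m)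
  | tick  : ClosedAbove d P → ClosedAbove d (.tick P)
  | par   : ClosedAbove d P → ClosedAbove d Q → ClosedAbove d (.par P Q)
  | out   : ClosedAbove d P → ClosedAbove d Q → ClosedAbove d (.out c v P Q)
  | inp   : (∀ v, ClosedAbove d (f v)) → ClosedAbove d Q → ClosedAbove d (.inp c f Q)
  | read  : (∀ v, ClosedAbove d (f v)) → ClosedAbove d Q → ClosedAbove d (.read s f Q)
  | write : ClosedAbove d P → ClosedAbove d Q → ClosedAbove d (.write a v P Q)
  | res   : ClosedAbove d P → ClosedAbove d (.res P c)
  | fix   : ClosedAbove (d+1) P → ClosedAbove d (.fix P)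

/-- A closed process: no free process variables. -/
def Proc.Closed (P : Proc) : Prop := ClosedAbove 0 P

/-- `TG n P`: process variable `n` occurs only time-guarded in `P`
(occurrences under `tick.-` or in the timeout continuation `Q` of `⌊π.P⌋Q`
are time-guarded). -/
inductive TG : ℕ → Proc → Prop where
  | nil   : TG n .nil
  | pvar  : m ≠ n → TG n (.pvar m)
  | tick  : TG n (.tick P)
  | par   : TG n P → TG n Q → TG n (.par P Q)
  | out   : TG n P → TG n (.out c v P Q)
  | inp   : (∀ v, TG n (f v)) → TG n (.inp c f Q)
  | read  : (∀ v, TG n (f v)) → TG n (.read s f Q)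
  | write : TG n P → TG n (.write a v P Q)
  | res   : TG n P → TG n (.res P c)
  | fix   : TG (n+1) P → TG n (.fix P)

/-- Well-formed processes: in every recursion `fix X.P` all occurrences of `X`
in `P` are time-guarded. -/
inductive WF : Proc → Prop where
  | nil   : WF .nil
  | pvar  : WF (.pvar m)
  | tick  : WF P → WF (.tick P)
  | par   : WF P → WF Q → WF (.par P Q)
  | out   : WF P → WF Q → WF (.out c v P Q)
  | inp   : (∀ v, WF (f v)) → WF Q → WF (.inp c f Q)
  | read  : (∀ v, WF (f v)) → WF Q → WF (.read s f Q)
  | write : WF P → WF Q → WF (.write a v P Q)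
  | res   : WF P → WF (.res P c)
  | fix   : TG 0 P → WF P → WF (.fix P)

/-- Non-interfering process: it never reads sensors nor writes actuators. -/
inductive NonInterfering : Proc → Prop where
  | nil  : NonInterfering .nil
  | pvar : NonInterfering (.pvar m)
  | tick : NonInterfering P → NonInterfering (.tick P)
  | par  : NonInterfering P → NonInterfering Q → NonInterfering (.par P Q)
  | out  : NonInterfering P → NonInterfering Q → NonInterfering (.out c v P Q)
  | inp  : (∀ v, NonInterfering (f v)) → NonInterfering Q → NonInterfering (.inp c f Q)
  | res  : NonInterfering P → NonInterfering (.res P c)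
  | fix  : NonInterfering P → NonInterfering (.fix P)

/-- `DevOK A S P`: every actuator mentioned in `P` is in `A` and every sensor
mentioned in `P` is in `S`. -/
inductive DevOK (A S : Finset ℕ) : Proc → Prop where
  | nil   : DevOK A S .nil
  | pvar  : DevOK A S (.pvar m)
  | tick  : DevOK A S P → DevOK A S (.tick P)
  | par   : DevOK A S P → DevOK A S Q → DevOK A S (.par P Q)
  | out   : DevOK A S P → DevOK A S Q → DevOK A S (.out c v P Q)
  | inp   : (∀ v, DevOK A S (f v)) → DevOK A S Q → DevOK A S (.inp c f Q)
  | read  : s ∈ S → (∀ v, DevOK A S (f v)) → DevOK A S Q → DevOK A S (.read s f Q)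
  | write : a ∈ A → DevOK A S P → DevOK A S Q → DevOK A S (.write a v P Q)
  | res   : DevOK A S P → DevOK A S (.res P c)
  | fix   : DevOK A S P → DevOK A S (.fix P)

/-! ## Physical environments -/

structure Env where
  X : Finset ℕ                       -- state variables
  A : Finset ℕ                       -- actuators
  S : Finset ℕ                       -- sensors
  xi_x : {n // n ∈ X} → ℝ            -- state function
  xi_u : {n // n ∈ A} → ℝ            -- actuator function
  xi_w : {n // n ∈ X} → ℝ            -- uncertainty function
  evol : ({n // n ∈ X} → ℝ) → ({n // n ∈ A} → ℝ) → ({n // n ∈ X} → ℝ) →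
         Set ({n // n ∈ X} → ℝ)      -- evolution map
  xi_e : {n // n ∈ S} → ℝ            -- sensor-error function
  meas : ({n // n ∈ X} → ℝ) → ({n // n ∈ S} → ℝ) →
         Set ({n // n ∈ S} → ℝ)      -- measurement map
  inv  : ({n // n ∈ X} → ℝ) → Prop   -- invariant function

/-- Possible measurements of sensor `s` in `E`. -/
def readSensor (E : Env) (s : ℕ) : Set ℝ :=
  { r | ∃ h : s ∈ E.S, ∃ ξ ∈ E.meas E.xi_x E.xi_e, r = ξ ⟨s, h⟩ }

/-- Update the value of actuator `a` to `v`. -/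
def updateAct (E : Env) (a : ℕ) (v : ℝ) : Env :=
  { E with xi_u := fun b => if (b : ℕ) = a then v else E.xi_u b }

/-- The set of next admissible environments. -/
def nextEnv (E : Env) : Set Env :=
  { E' | ∃ ξ ∈ E.evol E.xi_x E.xi_u E.xi_w, E' = { E with xi_x := ξ } }

/-- The invariant of `E`, evaluated at the current state. -/
def invHolds (E : Env) : Prop := E.inv E.xi_x

/-! ## Disjoint union of environments -/

/-- Glue two functions defined on finite sets into one on the union
(well defined on disjoint sets). -/
def glue {X1 X2 : Finset ℕ} (f : {n // n ∈ X1} → ℝ) (g : {n // n ∈ X2} → ℝ) :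
    {n // n ∈ X1 ∪ X2} → ℝ :=
  fun x => if h : (x : ℕ) ∈ X1 then f ⟨x, h⟩
           else g ⟨x, (Finset.mem_union.mp x.2).resolve_left h⟩

/-- Restriction of a function on a union to the left component. -/
def restrL {X1 X2 : Finset ℕ} (f : {n // n ∈ X1 ∪ X2} → ℝ) : {n // n ∈ X1} → ℝ :=
  fun x => f ⟨x, Finset.mem_union_left _ x.2⟩

/-- Restriction of a function on a union to the right component. -/
def restrR {X1 X2 : Finset ℕ} (f : {n // n ∈ X1 ∪ X2} → ℝ) : {n // n ∈ X2} → ℝ :=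
  fun x => f ⟨x, Finset.mem_union_right _ x.2⟩

/-- Disjointness of the name sets of two environments. -/
def EnvDisj (E1 E2 : Env) : Prop :=
  Disjoint E1.X E2.X ∧ Disjoint E1.A E2.A ∧ Disjoint E1.S E2.S

/-- Disjoint union `E1 ⊎ E2` of two environments. -/
def Env.disjUnion (E1 E2 : Env) : Env where
  X := E1.X ∪ E2.X
  A := E1.A ∪ E2.A
  S := E1.S ∪ E2.S
  xi_x := glue E1.xi_x E2.xi_x
  xi_u := glue E1.xi_u E2.xi_u
  xi_w := glue E1.xi_w E2.xi_w
  evol := fun ξ ψ φ =>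
    { ξ' | ∃ ξ1 ∈ E1.evol (restrL ξ) (restrL ψ) (restrL φ),
           ∃ ξ2 ∈ E2.evol (restrR ξ) (restrR ψ) (restrR φ), ξ' = glue ξ1 ξ2 }
  xi_e := glue E1.xi_e E2.xi_e
  meas := fun ξ η =>
    { m | ∃ m1 ∈ E1.meas (restrL ξ) (restrL η),
          ∃ m2 ∈ E2.meas (restrR ξ) (restrR η), m = glue m1 m2 }
  inv := fun ξ => E1.inv (restrL ξ) ∧ E2.inv (restrR ξ)

/-! ## Cyber-physical systems -/

structure CPS where
  env  : Env
  proc : Proc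

/-- Well-formed CPS: closed, time-guarded process mentioning only devices of
its environment. -/
def CPS.WellFormed (M : CPS) : Prop :=
  M.proc.Closed ∧ WF M.proc ∧ DevOK M.env.A M.env.S M.proc

/-- Disjoint union of (non-interfering) CPSs. -/
def CPS.disjUnion (M O : CPS) : CPS :=
  ⟨M.env.disjUnion O.env, .par M.proc O.proc⟩

/-- Untimed CPS transitions (rules Out, Inp, SensRead, ActWrite, Tau). -/
inductive CStepU : CPS → Label → CPS → Prop where
  | out : UStep P (.out c v) P' → invHolds E →
          CStepU ⟨E, P⟩ (.out c v) ⟨E, P'⟩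
  | inp : UStep P (.inp c v) P' → invHolds E →
          CStepU ⟨E, P⟩ (.inp c v) ⟨E, P'⟩
  | sensRead : UStep P (.read s v) P' → invHolds E → v ∈ readSensor E s →
          CStepU ⟨E, P⟩ .tau ⟨E, P'⟩
  | actWrite : UStep P (.write a v) P' → invHolds E →
          CStepU ⟨E, P⟩ .tau ⟨updateAct E a v, P'⟩
  | tau : UStep P .tau P' → invHolds E →
          CStepU ⟨E, P⟩ .tau ⟨E, P'⟩

/-- The CPS LTS (rule Time for tick, `CStepU` otherwise). -/
def CStep (M : CPS) (α : Label) (N : CPS) : Prop :=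
  match α with
  | .tick => TStep M.proc N.proc ∧ (∀ N', ¬ CStepU M .tau N') ∧
             invHolds M.env ∧ N.env ∈ nextEnv M.env
  | _ => CStepU M α N

/-! ## Weak transitions and bisimulation -/

def TauStep (M N : CPS) : Prop := CStep M .tau N

/-- `M ⇒ N`. -/
def WeakTau : CPS → CPS → Prop := Relation.ReflTransGen TauStep

/-- `M ⇒α⇒ N`. -/
def WeakStep (M : CPS) (α : Label) (N : CPS) : Prop :=
  ∃ M₁ M₂, WeakTau M M₁ ∧ CStep M₁ α M₂ ∧ WeakTau M₂ N

/-- `M ⇒α̂⇒ N`. -/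
def WeakHat (M : CPS) (α : Label) (N : CPS) : Prop :=
  match α with
  | .tau => WeakTau M N
  | _ => WeakStep M α N

def IsBisimulation (R : CPS → CPS → Prop) : Prop :=
  (∀ {M N}, R M N → R N M) ∧
  (∀ {M N α M'}, R M N → CStep M α M' → ∃ N', WeakHat N α N' ∧ R M' N')

/-- Weak bisimilarity `M ≈ N`. -/
def Bisim (M N : CPS) : Prop := ∃ R, IsBisimulation R ∧ R M N

/-! ## Traces -/

/-- Reachability in the CPS LTS. -/
def Reach : CPS → CPS → Prop :=
  Relation.ReflTransGen (fun M N => ∃ α, CStep M α N)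

def UntimedStep (M N : CPS) : Prop := ∃ α, α ≠ Label.tick ∧ CStep M α N

def UntimedReach : CPS → CPS → Prop := Relation.ReflTransGen UntimedStep

/-- One time slot: some untimed activity followed by a tick. -/
def SlotStep (M N : CPS) : Prop := ∃ M', UntimedReach M M' ∧ CStep M' .tick N

/-! ## Derived process notation -/

/-- Persistent prefix `π.P := fix X.⌊π.P⌋X` (output). -/
def prefOut (c : Chan) (v : Val) (P : Proc) : Proc :=
  .fix (.out c v (Proc.lift 0 P) (.pvar 0))

/-- Persistent prefix (actuator write). -/
def prefWrite (a : ActName) (v : Val) (P : Proc) : Proc :=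
  .fix (.write a v (Proc.lift 0 P) (.pvar 0))

/-- Persistent prefix (sensor read). -/
def prefRead (s : SensName) (f : Val → Proc) : Proc :=
  .fix (.read s (fun v => Proc.lift 0 (f v)) (.pvar 0))

/-- `tick^k.P`. -/
def Proc.ticks : ℕ → Proc → Proc
  | 0, P => P
  | n+1, P => .tick (Proc.ticks n P)

/-! ## The engine case study -/

noncomputable section
open Classical

def engDelta : ℝ := 0.4   -- uncertainty δ
def engEps : ℝ := 0.1     -- sensor error ε

/-- Value written on the actuator `cool` to turn the cooling on
(the actuator is on iff its value is negative). -/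
def valOn : Val := -1
/-- Value written on the actuator `cool` to turn the cooling off. -/
def valOff : Val := 1

def IsOn (u : ℝ) : Prop := u < 0
def IsOff (u : ℝ) : Prop := 0 ≤ u

/-- `heat(ξu, cool)`: `-coolRate` if the cooling is active, `+1` otherwise. -/
def engHeat (coolRate : ℝ) (u : ℝ) : ℝ := if u < 0 then -coolRate else 1

def warningCh : Chan := 0
def alarmCh : Chan := 1
def failureCh : Chan := 2

/-- The physical environment of the engine, with cooling power `coolRate`,
state variable `x` (temperature), actuator `a` (cool) and sensor `s`. -/
def EngEnvN (coolRate : ℝ) (x a s : ℕ) : Env where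
  X := {x}
  A := {a}
  S := {s}
  xi_x := fun _ => 0
  xi_u := fun _ => valOff
  xi_w := fun _ => engDelta
  evol := fun ξ ψ _ =>
    { ξ' | ∃ γ ∈ Set.Icc (-engDelta) engDelta,
           ∀ y u, ξ' y = ξ y + engHeat coolRate (ψ u) + γ }
  xi_e := fun _ => engEps
  meas := fun ξ _ =>
    { m | ∀ t y, m t ∈ Set.Icc (ξ y - engEps) (ξ y + engEps) }
  inv := fun ξ => ∀ y, 0 ≤ ξ y ∧ ξ y ≤ 30

/-- The controller of the engine with identifier `ID`, actuator `a` and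
sensor `s`:
`Ctrl = fix X. s?(x). if x > 10 then Cooling else tick.X` with
`Cooling = a!⟨on⟩.fix Y.tick⁵.s?(x). if x > 10 then w̄arning⟨ID⟩.Y else a!⟨off⟩.tick.X`. -/
def CtrlN (ID : Val) (a s : ℕ) : Proc :=
  .fix (prefRead s (fun x =>
    if 10 < x then
      prefWrite a valOn (.fix (Proc.ticks 5 (prefRead s (fun y =>
        if 10 < y then prefOut warningCh ID (.pvar 0)
        else prefWrite a valOff (.tick (.pvar 1))))))
    else .tick (.pvar 0)))

/-- The engine with cooling power `coolRate`. -/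
def EngGen (coolRate : ℝ) : CPS := ⟨EngEnvN coolRate 0 0 0, CtrlN 0 0 0⟩

/-- The engine `Eng`. -/
def Eng : CPS := EngGen 1
/-- The variant engine `Enḡ` (heat = −0.8 when cooling). -/
def EngBar : CPS := EngGen 0.8
/-- The variant engine `Enĝ` (heat = −0.7 when cooling). -/
def EngHat : CPS := EngGen 0.7

/-- Current temperature of an engine-like CPS (state variable named 0). -/
def CPS.temp (M : CPS) : ℝ :=
  if h : (0 : ℕ) ∈ M.env.X then M.env.xi_x ⟨0, h⟩ else 0

/-- Current value of the `cool` actuator of an engine-like CPS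
(actuator named 0). -/
def CPS.cool (M : CPS) : ℝ :=
  if h : (0 : ℕ) ∈ M.env.A then M.env.xi_u ⟨0, h⟩ else 0

/-! ## The airplane case study -/

def idL : Val := 0
def idR : Val := 1

/-- `CheckAux id m` is `Check^id_(5-m)`; the free process variable 0 is the
recursion variable `X` of `Check`. -/
def CheckAux (id : Val) : ℕ → Proc
  | 0 => .inp warningCh (fun z =>
           if z ≠ id then prefOut alarmCh 0 (.tick (.pvar 0))
           else prefOut failureCh id (.tick (.pvar 0)))
         (prefOut failureCh id (.pvar 0))
  | m+1 => .inp warningCh (fun y =>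
           if y ≠ id then prefOut alarmCh 0 (.tick (.pvar 0))
           else .tick (CheckAux id m))
         (CheckAux id m)

/-- The monitoring process `Check`. -/
def Check : Proc :=
  .fix (.inp warningCh
    (fun x => if x = idL then CheckAux idL 4 else CheckAux idR 4)
    (.pvar 0))

/-- The left engine (identifier L, devices named 0). -/
def EngL (coolRate : ℝ) : CPS := ⟨EngEnvN coolRate 0 0 0, CtrlN idL 0 0⟩
/-- The right engine (identifier R, devices named 1). -/
def EngR (coolRate : ℝ) : CPS := ⟨EngEnvN coolRate 1 1 1, CtrlN idR 1 1⟩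

/-- `Airplane(r) = ((Eng_L ⊎ Eng_R) ‖ Check)∖warning` with cooling power r. -/
def AirplaneGen (coolRate : ℝ) : CPS :=
  ⟨(EngEnvN coolRate 0 0 0).disjUnion (EngEnvN coolRate 1 1 1),
   .res (.par (.par (CtrlN idL 0 0) (CtrlN idR 1 1)) Check) warningCh⟩

def Airplane : CPS := AirplaneGen 1
def AirplaneBar : CPS := AirplaneGen 0.8

end

/-! ### Auxiliary development for Proposition 2 -/

lemma Proc.lift_ite (c : ℕ) (p : Prop) [Decidable p] (P Q : Proc) :
    Proc.lift c (if p then P else Q) = if p then Proc.lift c P else Proc.lift c Q :=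
  apply_ite _ _ _ _

lemma Proc.subst_ite (p : Prop) [Decidable p] (P Q : Proc) (n : ℕ) (R : Proc) :
    Proc.subst (if p then P else Q) n R
      = if p then Proc.subst P n R else Proc.subst Q n R :=
  apply_ite (fun X => Proc.subst X n R) _ _ _

noncomputable section
open Classical

/-- The engine controller (state: waiting for a sensor read, cooling off). -/
def PA : Proc := CtrlN 0 0 0

/-- State: about to switch the cooling off. -/
def PWoff : Proc := .fix (.write 0 valOff (.tick PA) (.pvar 0))

/-- The body of the 5-tick cooling loop (free var 0 = the loop itself). -/
def PLbody : Proc :=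
  Proc.ticks 5 (.fix (.read 0
    (fun y => if 10 < y then .fix (.out warningCh 0 (.pvar 2) (.pvar 0)) else PWoff)
    (.pvar 0)))

/-- State: the cooling loop. -/
def PL : Proc := .fix PLbody

/-- State: about to switch the cooling on. -/
def PWon : Proc := .fix (.write 0 valOn PL (.pvar 0))

/-- State: reading the sensor inside the cooling loop. -/
def PRg : Proc := .fix (.read 0
    (fun y => if 10 < y then .fix (.out warningCh 0 PL (.pvar 0)) else PWoff)
    (.pvar 0))

end

-- test computations
example : ∃ F, Proc.unfold (Proc.unfold PA.fix |>.fix) = F := ⟨_, rfl⟩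


lemma UStep_PA {l Q} (h : UStep PA l Q) :
    ∃ v, l = .read 0 v ∧ Q = (if 10 < v then PWon else .tick PA) := by
  cases h with
  | unfold h1 =>
    cases h1 with
    | unfold h2 =>
      cases h2 with
      | read =>
        refine ⟨_, rfl, ?_⟩
        by_cases hv : (10:ℝ) < ‹Val›
        · simp [hv, CtrlN, prefRead, prefWrite, prefOut, PWon, PL, PLbody, PWoff, PA,
            Proc.ticks, Proc.unfold, Proc.subst, Proc.lift, Proc.subst_ite, Proc.lift_ite]
        · simp [hv, CtrlN, prefRead, prefWrite, prefOut, PWon, PL, PLbody, PWoff, PA,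
            Proc.ticks, Proc.unfold, Proc.subst, Proc.lift, Proc.subst_ite, Proc.lift_ite]

lemma UStep_PRg {l Q} (h : UStep PRg l Q) :
    ∃ v, l = .read 0 v ∧
      Q = (if 10 < v then .fix (.out warningCh 0 PL (.pvar 0)) else PWoff) := by
  cases h with
  | unfold h1 =>
    cases h1 with
    | read =>
      refine ⟨_, rfl, ?_⟩
      by_cases hv : (10:ℝ) < ‹Val›
      · simp [hv, CtrlN, prefRead, prefWrite, prefOut, PWon, PL, PLbody, PWoff, PA, PRg,
          Proc.ticks, Proc.unfold, Proc.subst, Proc.lift, Proc.subst_ite, Proc.lift_ite]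
      · simp [hv, CtrlN, prefRead, prefWrite, prefOut, PWon, PL, PLbody, PWoff, PA, PRg,
          Proc.ticks, Proc.unfold, Proc.subst, Proc.lift, Proc.subst_ite, Proc.lift_ite]

lemma UStep_PWon {l Q} (h : UStep PWon l Q) : l = .write 0 valOn ∧ Q = PL := by
  cases h with
  | unfold h1 =>
    cases h1 with
    | write =>
      refine ⟨rfl, ?_⟩
      simp [CtrlN, prefRead, prefWrite, prefOut, PWon, PL, PLbody, PWoff, PA,
        Proc.ticks, Proc.unfold, Proc.subst, Proc.lift, Proc.subst_ite, Proc.lift_ite]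

lemma UStep_PWoff {l Q} (h : UStep PWoff l Q) : l = .write 0 valOff ∧ Q = .tick PA := by
  cases h with
  | unfold h1 =>
    cases h1 with
    | write =>
      refine ⟨rfl, ?_⟩
      simp [CtrlN, prefRead, prefWrite, prefOut, PWon, PL, PLbody, PWoff, PA,
        Proc.ticks, Proc.unfold, Proc.subst, Proc.lift, Proc.subst_ite, Proc.lift_ite]

lemma UStep_tick {P l Q} (h : UStep (.tick P) l Q) : False := by cases h

lemma UStep_PL {l Q} (h : UStep PL l Q) : False := by
  cases h with
  | unfold h1 => exact UStep_tick h1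

lemma TStep_tick {P Q} (h : TStep (.tick P) Q) : Q = P := by cases h; rfl

lemma TStep_PL {Q} (h : TStep PL Q) : Q = .tick (.tick (.tick (.tick PRg))) := by
  cases h with
  | unfold h1 =>
    rw [TStep_tick h1]
    simp [CtrlN, prefRead, prefWrite, prefOut, PWon, PL, PLbody, PWoff, PA, PRg,
      Proc.ticks, Proc.unfold, Proc.subst, Proc.lift, Proc.subst_ite, Proc.lift_ite]

lemma UStep_PA_read (v : Val) : ∃ Q, UStep PA (.read 0 v) Q :=
  ⟨_, UStep.unfold (UStep.unfold UStep.read)⟩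

lemma UStep_PRg_read (v : Val) : ∃ Q, UStep PRg (.read 0 v) Q :=
  ⟨_, UStep.unfold UStep.read⟩

lemma UStep_PWon_write : ∃ Q, UStep PWon (.write 0 valOn) Q :=
  ⟨_, UStep.unfold UStep.write⟩

lemma UStep_PWoff_write : ∃ Q, UStep PWoff (.write 0 valOff) Q :=
  ⟨_, UStep.unfold UStep.write⟩


noncomputable section
open Classical

/-- Engine environment with temperature `t` and cooling-actuator value `u`. -/
def mkE (t u : ℝ) : Env := { EngEnvN 1 0 0 0 with xi_x := fun _ => t, xi_u := fun _ => u }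

lemma Eng_env : Eng.env = mkE 0 valOff := rfl

lemma updateAct_mkE (t u v : ℝ) : updateAct (mkE t u) 0 v = mkE t v := by
  unfold updateAct mkE
  congr 1
  funext b
  obtain ⟨b, hb⟩ := b
  simp only [EngEnvN, Finset.mem_singleton] at hb
  subst hb
  simp

lemma mem_nextEnv {t u : ℝ} {E' : Env} (h : E' ∈ nextEnv (mkE t u)) :
    ∃ γ, -engDelta ≤ γ ∧ γ ≤ engDelta ∧ E' = mkE (t + engHeat 1 u + γ) u := by
  obtain ⟨ξ, hξ, rfl⟩ := h
  obtain ⟨γ, hγ, hval⟩ := hξ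
  refine ⟨γ, hγ.1, hγ.2, ?_⟩
  unfold mkE
  congr 1
  funext y
  exact hval y ⟨0, by simp [mkE, EngEnvN]⟩

lemma mem_readSensor {t u v : ℝ} (h : v ∈ readSensor (mkE t u) 0) :
    t - engEps ≤ v ∧ v ≤ t + engEps := by
  obtain ⟨hs, ξ, hξ, rfl⟩ := h
  have := hξ ⟨0, hs⟩ ⟨0, by simp [mkE, EngEnvN]⟩
  exact ⟨this.1, this.2⟩

lemma self_mem_readSensor (t u : ℝ) : t ∈ readSensor (mkE t u) 0 := by
  refine ⟨by simp [mkE, EngEnvN], fun _ => t, fun t' y => ?_, rfl⟩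
  constructor <;> simp [mkE, EngEnvN, engEps] <;> norm_num

lemma temp_mkE (t u : ℝ) (p : Proc) : CPS.temp ⟨mkE t u, p⟩ = t := by
  simp [CPS.temp, mkE, EngEnvN]

end


noncomputable section
open Classical

/-- The inductive invariant on reachable engine states. -/
def StateOK (p : Proc) (t u : ℝ) : Prop :=
  (p = PA ∧ 0 ≤ u ∧ t ≤ 11.5) ∨
  (p = .tick PA ∧ 0 ≤ u ∧ t ≤ 10.1) ∨
  (p = PWon ∧ 9.9 < t ∧ t ≤ 11.5) ∨
  (p = PL ∧ u = valOn ∧ 9.9 < t ∧ t ≤ 11.5) ∨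
  (p = .tick (.tick (.tick (.tick PRg))) ∧ u = valOn ∧ 8.5 < t ∧ t ≤ 10.9) ∨
  (p = .tick (.tick (.tick PRg)) ∧ u = valOn ∧ 7.1 < t ∧ t ≤ 10.3) ∨
  (p = .tick (.tick PRg) ∧ u = valOn ∧ 5.7 < t ∧ t ≤ 9.7) ∨
  (p = .tick PRg ∧ u = valOn ∧ 4.3 < t ∧ t ≤ 9.1) ∨
  (p = PRg ∧ u = valOn ∧ 2.9 < t ∧ t ≤ 8.5) ∨
  (p = PWoff ∧ 2.9 < t ∧ t ≤ 8.5)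

def Inv (M : CPS) : Prop := ∃ t u, M.env = mkE t u ∧ StateOK M.proc t u

lemma engHeat_nonneg {u : ℝ} (hu : 0 ≤ u) : engHeat 1 u = 1 := by
  simp [engHeat, not_lt.mpr hu]

lemma engHeat_valOn : engHeat 1 valOn = -1 := by norm_num [engHeat, valOn]

lemma Inv_init : Inv Eng := by
  refine ⟨0, valOff, Eng_env, Or.inl ⟨rfl, by norm_num [valOff], by norm_num⟩⟩

lemma Inv_step {M N : CPS} {α : Label} (hM : Inv M) (h : CStep M α N) : Inv N := by
  obtain ⟨t, u, hE, hS⟩ := hM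
  obtain ⟨E, p⟩ := M
  simp only at hE hS
  subst hE
  cases α with
  | tick =>
    obtain ⟨E', p'⟩ := N
    obtain ⟨hT, hno, hinv, hnext⟩ := h
    simp only at hT hno hinv hnext ⊢
    obtain ⟨γ, hγ1, hγ2, hE'⟩ := mem_nextEnv hnext
    rcases hS with ⟨rfl, hu, ht⟩ | ⟨rfl, hu, ht⟩ | ⟨rfl, ht1, ht2⟩ | ⟨rfl, hu, ht1, ht2⟩ |
      ⟨rfl, hu, ht1, ht2⟩ | ⟨rfl, hu, ht1, ht2⟩ | ⟨rfl, hu, ht1, ht2⟩ | ⟨rfl, hu, ht1, ht2⟩ |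
      ⟨rfl, hu, ht1, ht2⟩ | ⟨rfl, ht1, ht2⟩
    · exact absurd (CStepU.sensRead (UStep_PA_read t).choose_spec hinv
        (self_mem_readSensor t u)) (hno _)
    · refine ⟨_, u, hE', Or.inl ⟨TStep_tick hT, hu, ?_⟩⟩
      rw [engHeat_nonneg hu]
      simp only [engDelta] at hγ2; linarith
    · exact absurd (CStepU.actWrite UStep_PWon_write.choose_spec hinv) (hno _)
    · subst hu
      refine ⟨_, valOn, hE', Or.inr (Or.inr (Or.inr (Or.inr (Or.inl
        ⟨TStep_PL hT, rfl, ?_, ?_⟩))))⟩ <;>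
        (rw [engHeat_valOn]; simp only [engDelta] at hγ1 hγ2; linarith)
    · subst hu
      refine ⟨_, valOn, hE', Or.inr (Or.inr (Or.inr (Or.inr (Or.inr (Or.inl
        ⟨TStep_tick hT, rfl, ?_, ?_⟩)))))⟩ <;>
        (rw [engHeat_valOn]; simp only [engDelta] at hγ1 hγ2; linarith)
    · subst hu
      refine ⟨_, valOn, hE', Or.inr (Or.inr (Or.inr (Or.inr (Or.inr (Or.inr (Or.inl
        ⟨TStep_tick hT, rfl, ?_, ?_⟩))))))⟩ <;>
        (rw [engHeat_valOn]; simp only [engDelta] at hγ1 hγ2; linarith)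
    · subst hu
      refine ⟨_, valOn, hE', Or.inr (Or.inr (Or.inr (Or.inr (Or.inr (Or.inr (Or.inr (Or.inl
        ⟨TStep_tick hT, rfl, ?_, ?_⟩)))))))⟩ <;>
        (rw [engHeat_valOn]; simp only [engDelta] at hγ1 hγ2; linarith)
    · subst hu
      refine ⟨_, valOn, hE', Or.inr (Or.inr (Or.inr (Or.inr (Or.inr (Or.inr (Or.inr (Or.inr
        (Or.inl ⟨TStep_tick hT, rfl, ?_, ?_⟩))))))))⟩ <;>
        (rw [engHeat_valOn]; simp only [engDelta] at hγ1 hγ2; linarith)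
    · subst hu
      exact absurd (CStepU.sensRead (UStep_PRg_read t).choose_spec hinv
        (self_mem_readSensor t valOn)) (hno _)
    · exact absurd (CStepU.actWrite UStep_PWoff_write.choose_spec hinv) (hno _)
  | tau =>
    cases h with
    | sensRead h' hinv hv =>
      rcases hS with ⟨rfl, hu, ht⟩ | ⟨rfl, hu, ht⟩ | ⟨rfl, ht1, ht2⟩ | ⟨rfl, hu, ht1, ht2⟩ |
        ⟨rfl, hu, ht1, ht2⟩ | ⟨rfl, hu, ht1, ht2⟩ | ⟨rfl, hu, ht1, ht2⟩ | ⟨rfl, hu, ht1, ht2⟩ |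
        ⟨rfl, hu, ht1, ht2⟩ | ⟨rfl, ht1, ht2⟩
      · obtain ⟨w, hl, hQ⟩ := UStep_PA h'
        injection hl with hs hw
        subst hs; rw [hw] at hv
        obtain ⟨hv1, hv2⟩ := mem_readSensor hv
        simp only [engEps] at hv1 hv2
        by_cases h10 : (10:ℝ) < w
        · rw [if_pos h10] at hQ
          exact ⟨t, u, rfl, Or.inr (Or.inr (Or.inl ⟨hQ, by linarith, ht⟩))⟩
        · rw [if_neg h10] at hQ
          push_neg at h10
          exact ⟨t, u, rfl, Or.inr (Or.inl ⟨hQ, hu, by linarith⟩)⟩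
      · exact (UStep_tick h').elim
      · exact absurd (UStep_PWon h').1 (by simp)
      · exact (UStep_PL h').elim
      · exact (UStep_tick h').elim
      · exact (UStep_tick h').elim
      · exact (UStep_tick h').elim
      · exact (UStep_tick h').elim
      · obtain ⟨w, hl, hQ⟩ := UStep_PRg h'
        injection hl with hs hw
        subst hs; rw [hw] at hv
        obtain ⟨hv1, hv2⟩ := mem_readSensor hv
        simp only [engEps] at hv1 hv2
        have h10 : ¬ (10:ℝ) < w := by linarith
        rw [if_neg h10] at hQ
        exact ⟨t, u, rfl, Or.inr (Or.inr (Or.inr (Or.inr (Or.inr (Or.inr (Or.inr (Or.inr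
          (Or.inr ⟨hQ, ht1, ht2⟩))))))))⟩
      · exact absurd (UStep_PWoff h').1 (by simp)
    | actWrite h' hinv =>
      rcases hS with ⟨rfl, hu, ht⟩ | ⟨rfl, hu, ht⟩ | ⟨rfl, ht1, ht2⟩ | ⟨rfl, hu, ht1, ht2⟩ |
        ⟨rfl, hu, ht1, ht2⟩ | ⟨rfl, hu, ht1, ht2⟩ | ⟨rfl, hu, ht1, ht2⟩ | ⟨rfl, hu, ht1, ht2⟩ |
        ⟨rfl, hu, ht1, ht2⟩ | ⟨rfl, ht1, ht2⟩
      · obtain ⟨v, hl, _⟩ := UStep_PA h'; exact absurd hl (by simp)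
      · exact (UStep_tick h').elim
      · obtain ⟨hl, hQ⟩ := UStep_PWon h'
        injection hl with ha hv
        subst ha; subst hv
        refine ⟨t, valOn, ?_, Or.inr (Or.inr (Or.inr (Or.inl ⟨hQ, rfl, ht1, ht2⟩)))⟩
        simp [updateAct_mkE]
      · exact (UStep_PL h').elim
      · exact (UStep_tick h').elim
      · exact (UStep_tick h').elim
      · exact (UStep_tick h').elim
      · exact (UStep_tick h').elim
      · obtain ⟨v, hl, _⟩ := UStep_PRg h'; exact absurd hl (by simp)
      · obtain ⟨hl, hQ⟩ := UStep_PWoff h'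
        injection hl with ha hv
        subst ha; subst hv
        refine ⟨t, valOff, ?_, Or.inr (Or.inl ⟨hQ, by norm_num [valOff], by linarith⟩)⟩
        simp [updateAct_mkE]
    | tau h' hinv =>
      rcases hS with ⟨rfl, hu, ht⟩ | ⟨rfl, hu, ht⟩ | ⟨rfl, ht1, ht2⟩ | ⟨rfl, hu, ht1, ht2⟩ |
        ⟨rfl, hu, ht1, ht2⟩ | ⟨rfl, hu, ht1, ht2⟩ | ⟨rfl, hu, ht1, ht2⟩ | ⟨rfl, hu, ht1, ht2⟩ |
        ⟨rfl, hu, ht1, ht2⟩ | ⟨rfl, ht1, ht2⟩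
      · obtain ⟨v, hl, _⟩ := UStep_PA h'; exact absurd hl (by simp)
      · exact (UStep_tick h').elim
      · exact absurd (UStep_PWon h').1 (by simp)
      · exact (UStep_PL h').elim
      · exact (UStep_tick h').elim
      · exact (UStep_tick h').elim
      · exact (UStep_tick h').elim
      · exact (UStep_tick h').elim
      · obtain ⟨v, hl, _⟩ := UStep_PRg h'; exact absurd hl (by simp)
      · exact absurd (UStep_PWoff h').1 (by simp)
  | out c v =>
    cases h with
    | out h' hinv =>
      rcases hS with ⟨rfl, hu, ht⟩ | ⟨rfl, hu, ht⟩ | ⟨rfl, ht1, ht2⟩ | ⟨rfl, hu, ht1, ht2⟩ |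
        ⟨rfl, hu, ht1, ht2⟩ | ⟨rfl, hu, ht1, ht2⟩ | ⟨rfl, hu, ht1, ht2⟩ | ⟨rfl, hu, ht1, ht2⟩ |
        ⟨rfl, hu, ht1, ht2⟩ | ⟨rfl, ht1, ht2⟩
      · obtain ⟨w, hl, _⟩ := UStep_PA h'; exact absurd hl (by simp)
      · exact (UStep_tick h').elim
      · exact absurd (UStep_PWon h').1 (by simp)
      · exact (UStep_PL h').elim
      · exact (UStep_tick h').elim
      · exact (UStep_tick h').elim
      · exact (UStep_tick h').elim
      · exact (UStep_tick h').elim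
      · obtain ⟨w, hl, _⟩ := UStep_PRg h'; exact absurd hl (by simp)
      · exact absurd (UStep_PWoff h').1 (by simp)
  | inp c v =>
    cases h with
    | inp h' hinv =>
      rcases hS with ⟨rfl, hu, ht⟩ | ⟨rfl, hu, ht⟩ | ⟨rfl, ht1, ht2⟩ | ⟨rfl, hu, ht1, ht2⟩ |
        ⟨rfl, hu, ht1, ht2⟩ | ⟨rfl, hu, ht1, ht2⟩ | ⟨rfl, hu, ht1, ht2⟩ | ⟨rfl, hu, ht1, ht2⟩ |
        ⟨rfl, hu, ht1, ht2⟩ | ⟨rfl, ht1, ht2⟩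
      · obtain ⟨w, hl, _⟩ := UStep_PA h'; exact absurd hl (by simp)
      · exact (UStep_tick h').elim
      · exact absurd (UStep_PWon h').1 (by simp)
      · exact (UStep_PL h').elim
      · exact (UStep_tick h').elim
      · exact (UStep_tick h').elim
      · exact (UStep_tick h').elim
      · exact (UStep_tick h').elim
      · obtain ⟨w, hl, _⟩ := UStep_PRg h'; exact absurd hl (by simp)
      · exact absurd (UStep_PWoff h').1 (by simp)
  | write a v =>
    cases h
  | read s v =>
    cases h

lemma Inv_reach {M : CPS} (h : Reach Eng M) : Inv M := by
  induction h with
  | refl => exact Inv_init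
  | tail _ h2 ih => exact Inv_step ih h2.choose_spec

end


/-- **Temperature bounds at cooling switches** (Proposition 2): in any state
reachable from `Eng`, (1) when the engine turns on the cooling (performs a
write of an `on` value on the actuator `cool`) the temperature lies in
`(10−ε, 11+ε+δ]`; (2) when it turns off the cooling the temperature lies in
`(10−ε−5(1+δ), 11+ε+δ−5(1−δ)]`. -/
theorem engine_temperature_bounds (M : CPS) (hreach : Reach Eng M)
    (hinv : invHolds M.env) :
    (∀ v P', IsOn v → UStep M.proc (.write 0 v) P' →
      M.temp ∈ Set.Ioc (10 - engEps) (11 + engEps + engDelta)) ∧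
    (∀ v P', IsOff v → UStep M.proc (.write 0 v) P' →
      M.temp ∈ Set.Ioc (10 - engEps - 5 * (1 + engDelta))
                       (11 + engEps + engDelta - 5 * (1 - engDelta))) := by
  obtain ⟨t, u, hE, hS⟩ := Inv_reach hreach
  obtain ⟨E, p⟩ := M
  simp only at hE hS ⊢
  subst hE
  have htemp : CPS.temp ⟨mkE t u, p⟩ = t := temp_mkE t u p
  constructor
  · intro v P' hon hW
    rcases hS with ⟨h1, hu, ht⟩ | ⟨h1, hu, ht⟩ | ⟨h1, ht1, ht2⟩ | ⟨h1, hu, ht1, ht2⟩ |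
      ⟨h1, hu, ht1, ht2⟩ | ⟨h1, hu, ht1, ht2⟩ | ⟨h1, hu, ht1, ht2⟩ | ⟨h1, hu, ht1, ht2⟩ |
      ⟨h1, hu, ht1, ht2⟩ | ⟨h1, ht1, ht2⟩ <;> rw [h1] at hW
    · obtain ⟨w, hl, _⟩ := UStep_PA hW; exact absurd hl (by simp)
    · exact (UStep_tick hW).elim
    · rw [htemp]
      simp only [Set.mem_Ioc, engEps, engDelta]
      constructor <;> norm_num <;> linarith
    · exact (UStep_PL hW).elim
    · exact (UStep_tick hW).elim
    · exact (UStep_tick hW).elim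
    · exact (UStep_tick hW).elim
    · exact (UStep_tick hW).elim
    · obtain ⟨w, hl, _⟩ := UStep_PRg hW; exact absurd hl (by simp)
    · obtain ⟨hl, _⟩ := UStep_PWoff hW
      injection hl with ha hv
      rw [hv] at hon
      exact absurd hon (by norm_num [IsOn, valOff])
  · intro v P' hoff hW
    rcases hS with ⟨h1, hu, ht⟩ | ⟨h1, hu, ht⟩ | ⟨h1, ht1, ht2⟩ | ⟨h1, hu, ht1, ht2⟩ |
      ⟨h1, hu, ht1, ht2⟩ | ⟨h1, hu, ht1, ht2⟩ | ⟨h1, hu, ht1, ht2⟩ | ⟨h1, hu, ht1, ht2⟩ |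
      ⟨h1, hu, ht1, ht2⟩ | ⟨h1, ht1, ht2⟩ <;> rw [h1] at hW
    · obtain ⟨w, hl, _⟩ := UStep_PA hW; exact absurd hl (by simp)
    · exact (UStep_tick hW).elim
    · obtain ⟨hl, _⟩ := UStep_PWon hW
      injection hl with ha hv
      rw [hv] at hoff
      exact absurd hoff (by norm_num [IsOff, valOn])
    · exact (UStep_PL hW).elim
    · exact (UStep_tick hW).elim
    · exact (UStep_tick hW).elim
    · exact (UStep_tick hW).elim
    · exact (UStep_tick hW).elim
    · obtain ⟨w, hl, _⟩ := UStep_PRg hW; exact absurd hl (by simp)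
    · rw [htemp]
      simp only [Set.mem_Ioc, engEps, engDelta]
      constructor <;> norm_num <;> linarith

end CCPS
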